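/- Let Θ = ∏_{i=1}^n [a_i,b_i] ⊂ ℝⁿ, and for each i let v_i : [0,1] → ℝ be strictly increasing, q_i : Θ → [0,1], t_i : Θ → ℝ, and σ_i : [0,1] → ℝ. Suppose the direct mechanism is incentive compatible: for every θ ∈ Θ and every vector of reports (θ̃¹,…,θ̃ⁿ) ∈ Θⁿ, ∑_{i=1}^n [ θ_i v_i(q_i(θ)) − t_i(θ) + σ_i(q_i(θ)) ] ≥ ∑_{i=1}^n [ θ_i v_i(q_i(θ̃^i)) − t_i(θ̃^i) + σ_i(q_i(θ̃^i)) ]. Then: (i) for each i, the interim rent U_i(θ) = θ_i v_i(q_i(θ)) − t_i(θ) + σ_i(q_i(θ)) depends only on θ_i, i.e. U_i(θ_i, θ_{−i}) = U_i(θ_i, θ′_{−i}) for all θ_{−i}, θ′_{−i}; and (ii) there is a countable set N_i ⊂ [a_i,b_i] such that for all θ_i ∉ N_i, the allocation q_i(θ_i, θ_{−i}) is constant in θ_{−i}. -/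
import Mathlib


/-- In an incentive-compatible separable direct mechanism, the interim rent
`Uᵢ(θ) = θᵢ vᵢ(qᵢ(θ)) - tᵢ(θ) + σᵢ(qᵢ(θ))` from each firm `i` depends only on `θᵢ`, and off a
countable set of values of `θᵢ` the allocation `qᵢ` is constant in `θ₋ᵢ`. -/
theorem interim_rent_and_allocation_independent_of_other_coordinates
    (n : ℕ) (a b : Fin n → ℝ)
    (v : Fin n → ℝ → ℝ) (hv : ∀ i, StrictMonoOn (v i) (Set.Icc 0 1))
    (q : Fin n → (Fin n → ℝ) → ℝ) (hq01 : ∀ i θ, q i θ ∈ Set.Icc (0:ℝ) 1)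
    (t : Fin n → (Fin n → ℝ) → ℝ)
    (σ : Fin n → ℝ → ℝ)
    (hIC : ∀ θ ∈ Set.Icc a b, ∀ r : Fin n → (Fin n → ℝ), (∀ i, r i ∈ Set.Icc a b) →
      ∑ i, (θ i * v i (q i (r i)) - t i (r i) + σ i (q i (r i))) ≤
        ∑ i, (θ i * v i (q i θ) - t i θ + σ i (q i θ))) :
    (∀ i, ∀ θ ∈ Set.Icc a b, ∀ θ' ∈ Set.Icc a b, θ i = θ' i →
      θ i * v i (q i θ) - t i θ + σ i (q i θ) =
        θ' i * v i (q i θ') - t i θ' + σ i (q i θ')) ∧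
    (∀ i, ∃ N : Set ℝ, N.Countable ∧ N ⊆ Set.Icc (a i) (b i) ∧
      ∀ θ ∈ Set.Icc a b, ∀ θ' ∈ Set.Icc a b, θ i = θ' i → θ i ∉ N →
        q i θ = q i θ') := by
  classical
  -- Single-firm incentive compatibility
  have key : ∀ i, ∀ θ ∈ Set.Icc a b, ∀ θ' ∈ Set.Icc a b,
      θ i * v i (q i θ') - t i θ' + σ i (q i θ') ≤
        θ i * v i (q i θ) - t i θ + σ i (q i θ) := by
    intro i θ hθ θ' hθ'
    set r : Fin n → (Fin n → ℝ) := Function.update (fun _ => θ) i θ' with hr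
    have hrmem : ∀ j, r j ∈ Set.Icc a b := by
      intro j
      by_cases h : j = i
      · subst h; simpa [r] using hθ'
      · simpa [r, Function.update_of_ne h] using hθ
    have h := hIC θ hθ r hrmem
    have e1 : ∑ j, (θ j * v j (q j (r j)) - t j (r j) + σ j (q j (r j)))
        = (θ i * v i (q i θ') - t i θ' + σ i (q i θ'))
          + ∑ j ∈ Finset.univ.erase i,
              (θ j * v j (q j θ) - t j θ + σ j (q j θ)) := by
      rw [← Finset.add_sum_erase _ _ (Finset.mem_univ i)]
      congr 1
      · simp [r]
      · refine Finset.sum_congr rfl fun j hj => ?_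
        have hji : j ≠ i := Finset.ne_of_mem_erase hj
        simp [r, Function.update_of_ne hji]
    have e2 : ∑ j, (θ j * v j (q j θ) - t j θ + σ j (q j θ))
        = (θ i * v i (q i θ) - t i θ + σ i (q i θ))
          + ∑ j ∈ Finset.univ.erase i,
              (θ j * v j (q j θ) - t j θ + σ j (q j θ)) :=
      (Finset.add_sum_erase _ _ (Finset.mem_univ i)).symm
    rw [e1, e2] at h
    linarith
  constructor
  · -- part (i)
    intro i θ hθ θ' hθ' hii
    have h1 := key i θ hθ θ' hθ'
    have h2 := key i θ' hθ' θ hθ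
    rw [hii] at h1 ⊢
    linarith
  · -- part (ii)
    intro i
    have mono : ∀ θ ∈ Set.Icc a b, ∀ θ' ∈ Set.Icc a b, θ i < θ' i →
        v i (q i θ) ≤ v i (q i θ') := by
      intro θ hθ θ' hθ' hlt
      have h1 := key i θ hθ θ' hθ'
      have h2 := key i θ' hθ' θ hθ
      nlinarith
    set X : ℝ → Set ℝ :=
      fun s => (fun θ => v i (q i θ)) '' {θ | θ ∈ Set.Icc a b ∧ θ i = s} with hX
    have hbddA : ∀ s, BddAbove (X s) := by
      intro s
      refine ⟨v i 1, ?_⟩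
      rintro x ⟨θ, ⟨hθ, hθi⟩, rfl⟩
      exact (hv i).monotoneOn (hq01 i θ) (Set.right_mem_Icc.2 zero_le_one) (hq01 i θ).2
    have hbddB : ∀ s, BddBelow (X s) := by
      intro s
      refine ⟨v i 0, ?_⟩
      rintro x ⟨θ, ⟨hθ, hθi⟩, rfl⟩
      exact (hv i).monotoneOn (Set.left_mem_Icc.2 zero_le_one) (hq01 i θ) (hq01 i θ).1
    have hXmono : ∀ s s', s < s' → ∀ x ∈ X s, ∀ y ∈ X s', x ≤ y := by
      rintro s s' hss x ⟨θ, ⟨hθ, hθi⟩, rfl⟩ y ⟨θ', ⟨hθ', hθi'⟩, rfl⟩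
      exact mono θ hθ θ' hθ' (by rw [hθi, hθi']; exact hss)
    set N : Set ℝ := {s | s ∈ Set.Icc (a i) (b i) ∧ ∃ x ∈ X s, ∃ y ∈ X s, x < y}
      with hN
    have hdisj : ∀ s s', s < s' → (X s).Nonempty → (X s').Nonempty →
        Disjoint (Set.Ioo (sInf (X s)) (sSup (X s)))
          (Set.Ioo (sInf (X s')) (sSup (X s'))) := by
      intro s s' hss hne hne'
      have hle : sSup (X s) ≤ sInf (X s') :=
        csSup_le hne fun z hz => le_csInf hne' fun w hw => hXmono s s' hss z hz w hw
      rw [Set.disjoint_left]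
      rintro z ⟨_, hz2⟩ ⟨hz3, _⟩
      linarith
    have hNc : N.Countable := by
      have hpd : N.PairwiseDisjoint
          (fun s => Set.Ioo (sInf (X s)) (sSup (X s))) := by
        intro s hs s' hs' hne
        obtain ⟨_, x, hx, y, hy, _⟩ := hs
        obtain ⟨_, x', hx', y', hy', _⟩ := hs'
        rcases lt_or_gt_of_ne hne with h | h
        · exact hdisj s s' h ⟨x, hx⟩ ⟨x', hx'⟩
        · exact (hdisj s' s h ⟨x', hx'⟩ ⟨x, hx⟩).symm
      refine hpd.countable_of_isOpen (fun s _ => isOpen_Ioo) ?_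
      rintro s ⟨_, x, hx, y, hy, hxy⟩
      refine ⟨(x + y) / 2, ?_, ?_⟩
      · have := csInf_le (hbddB s) hx; linarith
      · have := le_csSup (hbddA s) hy; linarith
    refine ⟨N, hNc, fun s hs => hs.1, ?_⟩
    intro θ hθ θ' hθ' hii hnot
    have hx : v i (q i θ) ∈ X (θ i) := ⟨θ, ⟨hθ, rfl⟩, rfl⟩
    have hy : v i (q i θ') ∈ X (θ i) := ⟨θ', ⟨hθ', hii.symm⟩, rfl⟩
    have hmem : θ i ∈ Set.Icc (a i) (b i) := ⟨hθ.1 i, hθ.2 i⟩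
    have heq : v i (q i θ) = v i (q i θ') := by
      by_contra hne
      rcases lt_or_gt_of_ne hne with h | h
      · exact hnot ⟨hmem, _, hx, _, hy, h⟩
      · exact hnot ⟨hmem, _, hy, _, hx, h⟩
    exact (hv i).injOn (hq01 i θ) (hq01 i θ') heq
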